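/- (Strongly covariant Weyl–Heisenberg cloners are exactly the double-Bell family.) A matrix R indexed by (ZMod d)³ can be written as R_{(i,j,k),(i',j',k')} = d · Σ_l Ψ(i,j,k,l) · conj(Ψ(i',j',k',l)) for some unit vector Ψ : (ZMod d)⁴ → ℂ satisfying (U_{p,q} ⊗ U_{p,q} ⊗ conj(U_{p,q}) ⊗ conj(U_{p,q})) Ψ = Ψ for all p, q ∈ ZMod d, if and only if R = P_a for some a : ZMod d × ZMod d → ℂ with Σ_{r,s} |a_{r,s}|² = 1. -/

import Mathlib

open Matrix Kronecker BigOperators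

/-- ω = exp(2πi/d). -/
noncomputable def omega (d : ℕ) : ℂ := Complex.exp (2 * Real.pi * Complex.I / d)

/-- The Weyl–Heisenberg matrix `U_{p,q}`. -/
noncomputable def WH (d : ℕ) [NeZero d] (p q : ZMod d) : Matrix (ZMod d) (ZMod d) ℂ :=
  fun j k => if j = k + p then omega d ^ (q.val * k.val) else 0

/-- The operator `P_a` on `(ℂ^d)^⊗3` associated to the coefficients `a`:
`(P_a)_{(i,j,k),(i',j',k')} = (1/d) Σ_{r,s,r',s'} a_{rs} conj(a_{r's'})
  (U_{rs}ᴴ U_{r's'})_{i,i'} (U_{rs})_{j,k} conj((U_{r's'})_{j',k'})`. -/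
noncomputable def Pa (d : ℕ) [NeZero d] (a : ZMod d × ZMod d → ℂ) :
    Matrix (ZMod d × ZMod d × ZMod d) (ZMod d × ZMod d × ZMod d) ℂ :=
  fun x y => (d : ℂ)⁻¹ * ∑ r : ZMod d, ∑ s : ZMod d, ∑ r' : ZMod d, ∑ s' : ZMod d,
    a (r, s) * (starRingEnd ℂ) (a (r', s')) * ((WH d r s)ᴴ * WH d r' s') x.1 y.1 *
      WH d r s x.2.1 x.2.2 * (starRingEnd ℂ) (WH d r' s' y.2.1 y.2.2)

/-!
Covariance under `U_{p,0}` makes `Ψ` invariant under the diagonal shift of its four indices, and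
covariance under `U_{0,1}` multiplies `Ψ(i,j,k,l)` by `ω^(i+j-k-l)`, so `Ψ` is supported on
`i + j = k + l`, where it is an arbitrary function `g (j - k) (k - i)` of two differences.

On the other side, expanding the matrix product `(U_{rs}ᴴ U_{r's'})_{ii'}` as a sum over `l`
factors `P_a` as `d · Tr₄ |Ψ_a⟩⟨Ψ_a|` with
`Ψ_a = d⁻¹ Σ_{rs} a_{rs} (1 ⊗ U_{rs} ⊗ 1 ⊗ conj U_{rs})` applied to the (unnormalised) Bell
pairs on the factors `(2,3)` and `(1,4)`. This `Ψ_a` has the shape above with `g (r, ·)` the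
inverse discrete Fourier transform of `a (r, ·)`. The DFT is bijective and, up to the factor `d`,
an isometry of `ℓ²`, so the unit covariant vectors are exactly the `Ψ_a` with `Σ |a_{rs}|² = 1`.
-/

open ZMod ComplexConjugate

section
variable {d : ℕ}

noncomputable def doubleBell (g : ZMod d → ZMod d → ℂ) :
    ZMod d × ZMod d × ZMod d × ZMod d → ℂ :=
  fun ⟨i, j, k, l⟩ => if i + j = k + l then g (j - k) (k - i) else 0

lemma doubleBell_apply (g : ZMod d → ZMod d → ℂ) (i j k l : ZMod d) :
    doubleBell g (i, j, k, l) = if i + j = k + l then g (j - k) (k - i) else 0 := rfl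

variable [NeZero d]

lemma omega_pow_val_mul_val (m n : ZMod d) :
    omega d ^ (m.val * n.val) = stdAddChar (m * n) := by
  have h : m * n = ((m.val * n.val : ℕ) : ZMod d) := by simp
  rw [h, stdAddChar_apply, toCircle_natCast, omega, ← Complex.exp_nat_mul]
  congr 1
  ring

lemma WH_apply (p q j k : ZMod d) :
    WH d p q j k = if j = k + p then stdAddChar (q * k) else 0 := by
  simp only [WH, omega_pow_val_mul_val]

lemma WH_apply_eq_ite_sub (p q j k : ZMod d) :
    WH d p q j k = if k = j - p then stdAddChar (q * (j - p)) else 0 := by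
  rw [WH_apply]
  by_cases h : k = j - p
  · simp [h]
  · rw [if_neg h, if_neg fun h' => h (eq_sub_of_add_eq h'.symm)]

lemma sum_stdAddChar_mul (b : ZMod d) :
    ∑ x : ZMod d, stdAddChar (x * b) = if b = 0 then (d : ℂ) else 0 := by
  rw [AddChar.sum_mulShift b (isPrimitive_stdAddChar d), ZMod.card, Nat.cast_ite, Nat.cast_zero]

lemma sum_norm_sq_invDFT (φ : ZMod d → ℂ) :
    ∑ t, ‖𝓕⁻ φ t‖ ^ 2 = (d : ℝ)⁻¹ * ∑ s, ‖φ s‖ ^ 2 := by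
  have hd : (d : ℂ) ≠ 0 := NeZero.ne _
  have phase (t s s' : ZMod d) : stdAddChar (s * t) * φ s * (stdAddChar (-(s' * t)) *
      conj (φ s')) = φ s * conj (φ s') * stdAddChar (t * (s - s')) := by
    rw [show t * (s - s') = s * t + -(s' * t) by ring, AddChar.map_add_eq_mul]
    ring
  apply Complex.ofReal_injective
  push_cast
  simp only [← Complex.mul_conj', invDFT_apply, smul_eq_mul, map_mul, map_sum, map_inv₀,
    Complex.conj_natCast, ← AddChar.map_neg_eq_conj]
  simp_rw [mul_mul_mul_comm _ (Finset.sum _ _), Finset.sum_mul_sum, phase, ← Finset.mul_sum]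
  rw [Finset.sum_comm, Finset.sum_congr rfl fun s _ => Finset.sum_comm]
  simp_rw [← Finset.mul_sum, sum_stdAddChar_mul, sub_eq_zero, mul_ite, mul_zero,
    Finset.sum_ite_eq, Finset.mem_univ, if_true, ← Finset.sum_mul]
  field_simp

variable (d) in
noncomputable def whAction (p q : ZMod d) :
    Matrix (ZMod d × ZMod d × ZMod d × ZMod d) (ZMod d × ZMod d × ZMod d × ZMod d) ℂ :=
  WH d p q ⊗ₖ (WH d p q ⊗ₖ ((WH d p q).map (starRingEnd ℂ) ⊗ₖ
    (WH d p q).map (starRingEnd ℂ)))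

lemma whAction_mulVec_apply (p q : ZMod d) (Ψ : ZMod d × ZMod d × ZMod d × ZMod d → ℂ)
    (i j k l : ZMod d) :
    (whAction d p q *ᵥ Ψ) (i, j, k, l) =
      stdAddChar (q * (i + j - (k + l))) * Ψ (i - p, j - p, k - p, l - p) := by
  have phase : stdAddChar (q * (i - p)) * stdAddChar (q * (j - p)) *
      stdAddChar (-(q * (k - p))) * stdAddChar (-(q * (l - p))) =
      (stdAddChar (q * (i + j - (k + l))) : ℂ) := by
    simp only [← AddChar.map_add_eq_mul]
    ring_nf
  simp only [whAction, mulVec, dotProduct, Fintype.sum_prod_type, kroneckerMap_apply, map_apply,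
    WH_apply_eq_ite_sub, apply_ite (starRingEnd ℂ), map_zero, ← AddChar.map_neg_eq_conj,
    ite_mul, zero_mul, mul_ite, mul_zero, Finset.sum_ite_eq', Finset.mem_univ, if_true, ← phase]
  ring

lemma whAction_mulVec_doubleBell (p q : ZMod d) (g : ZMod d → ZMod d → ℂ) :
    whAction d p q *ᵥ doubleBell g = doubleBell g := by
  ext ⟨i, j, k, l⟩
  have hshift : i - p + (j - p) = k - p + (l - p) ↔ i + j = k + l := by
    constructor <;> intro h <;> linear_combination h
  simp only [whAction_mulVec_apply, doubleBell_apply, hshift]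
  split_ifs with h
  · rw [show i + j - (k + l) = 0 by rw [h, sub_self], mul_zero, AddChar.map_zero_eq_one, one_mul]
    congr 1 <;> ring
  · rw [mul_zero]

lemma exists_eq_doubleBell {Ψ : ZMod d × ZMod d × ZMod d × ZMod d → ℂ}
    (hΨ : ∀ p q, whAction d p q *ᵥ Ψ = Ψ) : ∃ g, Ψ = doubleBell g := by
  have translate (p i j k l : ZMod d) : Ψ (i - p, j - p, k - p, l - p) = Ψ (i, j, k, l) := by
    have h := congrFun (hΨ p 0) (i, j, k, l)
    rwa [whAction_mulVec_apply, zero_mul, AddChar.map_zero_eq_one, one_mul] at h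
  have support (i j k l : ZMod d) (h : i + j ≠ k + l) : Ψ (i, j, k, l) = 0 := by
    have h1 := congrFun (hΨ 0 1) (i, j, k, l)
    simp only [whAction_mulVec_apply, one_mul, sub_zero] at h1
    have hne : (stdAddChar (i + j - (k + l)) : ℂ) ≠ 1 := by
      rw [← AddChar.map_zero_eq_one (stdAddChar (N := d)), injective_stdAddChar.ne_iff]
      exact sub_ne_zero.mpr h
    have h2 : (stdAddChar (i + j - (k + l)) - 1) * Ψ (i, j, k, l) = 0 := by
      linear_combination h1
    exact (mul_eq_zero.mp h2).resolve_left (sub_ne_zero.mpr hne)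
  refine ⟨fun r t => Ψ (-r, t, t - r, 0), ?_⟩
  ext ⟨i, j, k, l⟩
  rw [doubleBell_apply]
  split_ifs with h
  · rw [← translate l, sub_self]
    congr 1
    simp only [Prod.mk.injEq, and_true]
    refine ⟨?_, ?_, ?_⟩ <;> linear_combination h
  · exact support i j k l h

lemma sum_norm_sq_doubleBell (g : ZMod d → ZMod d → ℂ) :
    ∑ x, ‖doubleBell g x‖ ^ 2 = d * ∑ r, ∑ t, ‖g r t‖ ^ 2 := by
  have hl (i j k l : ZMod d) : i + j = k + l ↔ l = i + j - k := by
    constructor <;> intro h <;> linear_combination -h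
  have shift (k : ZMod d) :
      ∑ i, ∑ j, ‖g (j - k) (k - i)‖ ^ 2 = ∑ r, ∑ t, ‖g r t‖ ^ 2 := by
    calc ∑ i, ∑ j, ‖g (j - k) (k - i)‖ ^ 2
        = ∑ i, ∑ r, ‖g r (k - i)‖ ^ 2 :=
          Finset.sum_congr rfl fun i _ => Fintype.sum_equiv (Equiv.subRight k) _ _ fun _ => rfl
      _ = ∑ r, ∑ i, ‖g r (k - i)‖ ^ 2 := Finset.sum_comm
      _ = ∑ r, ∑ t, ‖g r t‖ ^ 2 :=
          Finset.sum_congr rfl fun r _ => Fintype.sum_equiv (Equiv.subLeft k) _ _ fun _ => rfl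
  simp only [Fintype.sum_prod_type, doubleBell_apply, hl, apply_ite fun z : ℂ => ‖z‖ ^ 2,
    norm_zero, ne_eq, OfNat.ofNat_ne_zero, not_false_eq_true, zero_pow, Finset.sum_ite_eq',
    Finset.mem_univ, if_true]
  rw [Finset.sum_congr rfl fun i _ => Finset.sum_comm, Finset.sum_comm]
  simp only [shift, Finset.sum_const, Finset.card_univ, ZMod.card, nsmul_eq_mul]

variable (d) in
noncomputable def weylBell (a : ZMod d × ZMod d → ℂ) :
    ZMod d × ZMod d × ZMod d × ZMod d → ℂ :=
  fun ⟨i, j, k, l⟩ => (d : ℂ)⁻¹ *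
    ∑ rs : ZMod d × ZMod d, a rs * WH d rs.1 rs.2 j k * conj (WH d rs.1 rs.2 l i)

lemma Pa_apply_eq_sum_weylBell (a : ZMod d × ZMod d → ℂ) (i j k i' j' k' : ZMod d) :
    Pa d a (i, j, k) (i', j', k') =
      d * ∑ l, weylBell d a (i, j, k, l) * conj (weylBell d a (i', j', k', l)) := by
  have hd : (d : ℂ) ≠ 0 := NeZero.ne _
  calc Pa d a (i, j, k) (i', j', k')
      = (d : ℂ)⁻¹ * ∑ rs : ZMod d × ZMod d, ∑ rs' : ZMod d × ZMod d, ∑ l,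
          a rs * WH d rs.1 rs.2 j k * conj (WH d rs.1 rs.2 l i) *
            conj (a rs' * WH d rs'.1 rs'.2 j' k' * conj (WH d rs'.1 rs'.2 l i')) := by
        simp only [Pa, Matrix.mul_apply, conjTranspose_apply, RCLike.star_def, Finset.mul_sum,
          Fintype.sum_prod_type, map_mul, Complex.conj_conj, mul_comm, mul_assoc, mul_left_comm]
    _ = d * ∑ l, weylBell d a (i, j, k, l) * conj (weylBell d a (i', j', k', l)) := by
        simp only [weylBell, map_mul, map_inv₀, Complex.conj_natCast, map_sum]
        simp_rw [mul_mul_mul_comm _ (Finset.sum _ _), Finset.sum_mul_sum, ← Finset.mul_sum,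
          Complex.conj_conj]
        rw [Finset.sum_congr rfl fun rs _ => Finset.sum_comm, Finset.sum_comm]
        field_simp
        simp only [Finset.mul_sum, mul_assoc]

lemma weylBell_eq_doubleBell (a : ZMod d × ZMod d → ℂ) :
    weylBell d a = doubleBell fun r => 𝓕⁻ fun s => a (r, s) := by
  ext ⟨i, j, k, l⟩
  have hjk : ∀ r s : ZMod d, WH d r s j k = if r = j - k then stdAddChar (s * k) else 0 := by
    intro r s
    simp only [WH_apply, eq_sub_iff_add_eq', eq_comm (a := j)]
  have hli : l = i + (j - k) ↔ i + j = k + l := by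
    constructor <;> intro h <;> linear_combination -h
  simp only [weylBell, doubleBell_apply, Fintype.sum_prod_type]
  rw [Finset.sum_eq_single (j - k) (fun r _ hr => by simp [hjk, hr]) (by simp)]
  simp only [hjk, if_pos, WH_apply, hli, invDFT_apply, smul_eq_mul]
  split_ifs
  · congr 1
    refine Finset.sum_congr rfl fun s _ => ?_
    rw [← AddChar.map_neg_eq_conj, mul_assoc, ← AddChar.map_add_eq_mul, mul_comm]
    ring_nf
  · simp

lemma doubleBell_eq_weylBell (g : ZMod d → ZMod d → ℂ) :
    doubleBell g = weylBell d fun rs => 𝓕 (g rs.1) rs.2 := by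
  simp only [weylBell_eq_doubleBell, LinearEquiv.symm_apply_apply]

lemma sum_norm_sq_weylBell (a : ZMod d × ZMod d → ℂ) :
    ∑ x, ‖weylBell d a x‖ ^ 2 = ∑ rs, ‖a rs‖ ^ 2 := by
  have hd : (d : ℝ) ≠ 0 := NeZero.ne _
  rw [weylBell_eq_doubleBell, sum_norm_sq_doubleBell, Fintype.sum_prod_type]
  simp only [sum_norm_sq_invDFT, ← Finset.mul_sum]
  field_simp

end

/-- Strongly covariant Weyl–Heisenberg cloners are exactly the double-Bell family:
`R` arises as `d·Tr₄|Ψ⟩⟨Ψ|` for a strongly covariant unit vector `Ψ` iff `R = P_a`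
for some normalized coefficients `a`. -/
theorem strongly_covariant_iff_doubleBell (d : ℕ) [NeZero d]
    (R : Matrix (ZMod d × ZMod d × ZMod d) (ZMod d × ZMod d × ZMod d) ℂ) :
    (∃ Ψ : ZMod d × ZMod d × ZMod d × ZMod d → ℂ,
      (∑ x : ZMod d × ZMod d × ZMod d × ZMod d, ‖Ψ x‖ ^ 2 = 1) ∧
      (∀ p q : ZMod d,
        (WH d p q ⊗ₖ (WH d p q ⊗ₖ ((WH d p q).map (starRingEnd ℂ) ⊗ₖ
          (WH d p q).map (starRingEnd ℂ)))).mulVec Ψ = Ψ) ∧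
      (∀ i j k i' j' k' : ZMod d,
        R (i, j, k) (i', j', k') =
          (d : ℂ) * ∑ l : ZMod d, Ψ (i, j, k, l) * (starRingEnd ℂ) (Ψ (i', j', k', l)))) ↔
      ∃ a : ZMod d × ZMod d → ℂ,
        (∑ rs : ZMod d × ZMod d, ‖a rs‖ ^ 2 = 1) ∧ R = Pa d a := by
  constructor
  · rintro ⟨Ψ, hnorm, hcov, hR⟩
    obtain ⟨g, rfl⟩ := exists_eq_doubleBell hcov
    rw [doubleBell_eq_weylBell] at hnorm hR
    refine ⟨_, (sum_norm_sq_weylBell _).symm.trans hnorm, ?_⟩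
    ext ⟨i, j, k⟩ ⟨i', j', k'⟩
    rw [hR, Pa_apply_eq_sum_weylBell]
  · rintro ⟨a, hnorm, rfl⟩
    refine ⟨weylBell d a, (sum_norm_sq_weylBell a).trans hnorm, fun p q => ?_,
      Pa_apply_eq_sum_weylBell a⟩
    rw [weylBell_eq_doubleBell]
    exact whAction_mulVec_doubleBell p q _
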